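/- There is an absolute constant c > 0 with the following property. Let W be a finite subset of the interval [0,1] with |W| > 10, let f : W → ℝ≥0, and let C₁, C₂ ≥ 0 be constants such that for every subset Z ⊆ W one has Σ_{θ∈Z} f(θ) ≤ C₁·|Z|^{1/2} + C₂. Then Σ_{θ∈W} f(θ)² ≤ c·(C₁²·log|W| + C₂·max_{θ∈W} f(θ)). -/

import Mathlib

/-!
Enumerate `W` as `θ₁, …, θₙ` with `f(θₖ)` decreasing. Testing the hypothesis on `{θ₁, …, θₖ}`
gives `k f(θₖ) ≤ C₁ √k + C₂`. While `C₁ √k ≤ C₂`, the terms `f(θₖ)` have total at most `2 C₂`,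
so their squares sum to at most `2 C₂ max f`; beyond that point `f(θₖ) ≤ 2 C₁ / √k`, and the
squares sum to at most `4 C₁² Hₙ ≤ 8 C₁² log n`.
-/

open Finset

theorem Finset.exists_equiv_fin_antitone {α β : Type*} [LinearOrder β] (W : Finset α)
    (f : α → β) : ∃ e : Fin #W ≃ W, Antitone fun i => f (e i) := by
  set g : Fin #W → β := fun i => f (W.equivFin.symm i)
  refine ⟨(Fin.revPerm.trans (Tuple.sort g)).trans W.equivFin.symm, fun i j hij => ?_⟩
  simpa only [Equiv.trans_apply, Fin.revPerm_apply, Function.comp] using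
    Tuple.monotone_sort g (Fin.rev_le_rev.2 hij)

theorem Fin.sum_inv_succ_eq_harmonic (n : ℕ) :
    ∑ i : Fin n, (((i : ℕ) : ℝ) + 1)⁻¹ = harmonic n := by
  rw [Fin.sum_univ_eq_sum_range (fun i => ((i : ℝ) + 1)⁻¹), harmonic]
  push_cast
  rfl

theorem sq_le_of_mul_le_mul_sqrt {x t C : ℝ} (hx : 0 ≤ x) (ht : 0 < t)
    (h : t * x ≤ 2 * C * √t) : x ^ 2 ≤ 4 * C ^ 2 / t := by
  have hts : √t ^ 2 = t := Real.sq_sqrt ht.le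
  rw [le_div_iff₀ ht]
  nlinarith [mul_nonneg ht.le hx, pow_le_pow_left₀ (mul_nonneg ht.le hx) h 2]

section SumIicBound

variable {n : ℕ} {a : Fin n → ℝ} {C₁ C₂ : ℝ}

theorem Antitone.succ_mul_le_sum_Iic (ha : Antitone a) (k : Fin n) :
    ((k : ℕ) + 1 : ℝ) * a k ≤ ∑ i ∈ Iic k, a i := by
  calc ((k : ℕ) + 1 : ℝ) * a k = ∑ _i ∈ Iic k, a k := by
        rw [sum_const, Fin.card_Iic, nsmul_eq_mul]; push_cast; ring
    _ ≤ ∑ i ∈ Iic k, a i := sum_le_sum fun i hi => ha (mem_Iic.1 hi)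

theorem sum_filter_sqrt_le_le_two_mul (ha0 : ∀ i, 0 ≤ a i) (hC₂ : 0 ≤ C₂)
    (h : ∀ k, ∑ i ∈ Iic k, a i ≤ C₁ * √((k : ℕ) + 1 : ℝ) + C₂) :
    ∑ k ∈ univ.filter fun k : Fin n => C₁ * √((k : ℕ) + 1 : ℝ) ≤ C₂, a k ≤ 2 * C₂ := by
  set S := univ.filter fun k : Fin n => C₁ * √((k : ℕ) + 1 : ℝ) ≤ C₂
  rcases S.eq_empty_or_nonempty with hS | hS
  · rw [hS, sum_empty]; positivity
  have hmax := (mem_filter.1 (S.max'_mem hS)).2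
  calc ∑ k ∈ S, a k ≤ ∑ i ∈ Iic (S.max' hS), a i :=
        sum_le_sum_of_subset_of_nonneg (fun i hi => mem_Iic.2 (S.le_max' i hi))
          fun i _ _ => ha0 i
    _ ≤ 2 * C₂ := by linarith [h (S.max' hS)]

theorem sum_sq_le_of_sum_Iic_le (ha : Antitone a) (ha0 : ∀ i, 0 ≤ a i) {M : ℝ}
    (hM : ∀ i, a i ≤ M) (hM0 : 0 ≤ M) (hC₂ : 0 ≤ C₂)
    (h : ∀ k, ∑ i ∈ Iic k, a i ≤ C₁ * √((k : ℕ) + 1 : ℝ) + C₂) :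
    ∑ i, a i ^ 2 ≤ 4 * C₁ ^ 2 * harmonic n + 2 * C₂ * M := by
  have hterm : ∀ k, a k ^ 2 ≤ 4 * C₁ ^ 2 * ((k : ℕ) + 1 : ℝ)⁻¹ +
      M * if C₁ * √((k : ℕ) + 1 : ℝ) ≤ C₂ then a k else 0 := by
    intro k
    split_ifs with hk
    · have hinv : 0 ≤ ((k : ℕ) + 1 : ℝ)⁻¹ := by positivity
      nlinarith [ha0 k, hM k, sq_nonneg C₁]
    · have := sq_le_of_mul_le_mul_sqrt (C := C₁) (t := (k : ℕ) + 1) (ha0 k) (by positivity)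
        (by linarith [ha.succ_mul_le_sum_Iic k, h k])
      simpa [div_eq_mul_inv] using this
  calc ∑ i, a i ^ 2 ≤ ∑ k : Fin n, (4 * C₁ ^ 2 * ((k : ℕ) + 1 : ℝ)⁻¹ +
        M * if C₁ * √((k : ℕ) + 1 : ℝ) ≤ C₂ then a k else 0) := sum_le_sum fun k _ => hterm k
    _ = 4 * C₁ ^ 2 * harmonic n +
          M * ∑ k ∈ univ.filter fun k : Fin n => C₁ * √((k : ℕ) + 1 : ℝ) ≤ C₂, a k := by
      rw [sum_add_distrib, ← mul_sum, ← mul_sum, Fin.sum_inv_succ_eq_harmonic, sum_filter]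
    _ ≤ 4 * C₁ ^ 2 * harmonic n + 2 * C₂ * M := by
      nlinarith [sum_filter_sqrt_le_le_two_mul ha0 hC₂ h]

end SumIicBound

theorem one_le_log_of_three_le {x : ℝ} (hx : 3 ≤ x) : 1 ≤ Real.log x := by
  rw [Real.le_log_iff_exp_le (by linarith)]
  linarith [Real.exp_one_lt_three]

/-- If `f : W → ℝ≥0` on a finite set `W ⊆ [0,1]` with `|W| > 10` satisfies
`Σ_{θ∈Z} f(θ) ≤ C₁|Z|^{1/2} + C₂` for every `Z ⊆ W`, then
`Σ_{θ∈W} f(θ)² ≪ C₁² log|W| + C₂ max_{θ∈W} f(θ)`, with an absolute implied constant. -/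
theorem sum_sq_le_of_subset_sum_bound :
    ∃ c : ℝ, 0 < c ∧
      ∀ (W : Finset ℝ), (↑W : Set ℝ) ⊆ Set.Icc (0 : ℝ) 1 → 10 < W.card →
        ∀ hW : W.Nonempty,
          ∀ f : ℝ → ℝ, (∀ θ ∈ W, 0 ≤ f θ) →
            ∀ C₁ C₂ : ℝ, 0 ≤ C₁ → 0 ≤ C₂ →
              (∀ Z ⊆ W, ∑ θ ∈ Z, f θ ≤ C₁ * Real.sqrt (Z.card : ℝ) + C₂) →
              ∑ θ ∈ W, f θ ^ 2 ≤
                c * (C₁ ^ 2 * Real.log (W.card : ℝ) + C₂ * W.sup' hW f) := by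
  refine ⟨8, by norm_num, fun W _ hcard hW f hf C₁ C₂ _ hC₂ hsub => ?_⟩
  obtain ⟨e, he⟩ := W.exists_equiv_fin_antitone f
  have hmem (i : Fin #W) : (e i : ℝ) ∈ W := (e i).2
  have hM0 : 0 ≤ W.sup' hW f := (hf _ (hmem ⟨0, by omega⟩)).trans (le_sup' f (hmem _))
  have hIic (k : Fin #W) : ∑ i ∈ Iic k, f (e i) ≤ C₁ * √((k : ℕ) + 1 : ℝ) + C₂ := by
    have := hsub ((Iic k).map (e.toEmbedding.trans (Function.Embedding.subtype _)))
      (fun θ hθ => by obtain ⟨i, -, rfl⟩ := mem_map.1 hθ; exact hmem i)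
    rwa [sum_map, card_map, Fin.card_Iic, Nat.cast_add_one] at this
  have hsorted : ∑ θ ∈ W, f θ ^ 2 = ∑ i, f (e i) ^ 2 := by
    rw [← sum_coe_sort W, ← e.sum_comp]
  have hbound := sum_sq_le_of_sum_Iic_le he (fun i => hf _ (hmem i))
    (fun i => le_sup' f (hmem i)) hM0 hC₂ hIic
  have hharmonic := harmonic_le_one_add_log #W
  have hlog := one_le_log_of_three_le (x := #W) (by exact_mod_cast (by omega : 3 ≤ #W))
  rw [hsorted]
  nlinarith [sq_nonneg C₁, mul_nonneg hC₂ hM0]
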